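/- arXiv:math/0411187 — 3 statements merged into one kernel-verified Lean document; each statement's English description precedes it below -/
import Mathlib

section
/- Let U be a free R-module of rank n, and let d be the Koszul differential on Λ_* = Λ_*^R(U) associated to elements r_1,...,r_n ∈ R. Let Δ: Λ_* → Λ_* ⊗_R Λ_* be the coproduct of the exterior bialgebra, determined by Δ(m) = 1⊗m + m⊗1 for m of degree 1. Then Δ ∘ d = (d ⊗ 1) ∘ Δ. -/
universe u

open ExteriorAlgebra

/-!
Both `Δ ∘ d` and `(d ⊗ 1) ∘ Δ` are odd derivations along the algebra map `Δ`, so they are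
determined by their values on degree-one elements, generating the exterior algebra; there
both send `m` to the scalar `∑ⱼ mⱼ rⱼ`, since `d ⊗ 1` kills the second summand of
`Δ(m) = (m, 0) + (0, m)`.
-/

def IsGradedDerivation {R A : Type*} [CommRing R] [Ring A] [Algebra R A]
    (V : Submodule R A) (D : A →ₗ[R] A) : Prop :=
  ∀ (i : ℕ) (x y : A), x ∈ V ^ i → D (x * y) = D x * y + ((-1 : R) ^ i) • (x * D y)

namespace IsGradedDerivation

variable {R A : Type*} [CommRing R] [Ring A] [Algebra R A] {V : Submodule R A}
  {D : A →ₗ[R] A}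

theorem map_one (hD : IsGradedDerivation V D) : D 1 = 0 := by
  have h := hD 0 1 1 (by rw [pow_zero, Submodule.mem_one]; exact ⟨1, (algebraMap R A).map_one⟩)
  simpa only [one_mul, mul_one, pow_zero, one_smul, left_eq_add] using h

theorem map_algebraMap (hD : IsGradedDerivation V D) (c : R) : D (algebraMap R A c) = 0 := by
  rw [Algebra.algebraMap_eq_smul_one, map_smul, hD.map_one, smul_zero]

theorem map_mul_of_mem (hD : IsGradedDerivation V D) {x : A} (hx : x ∈ V) (y : A) :
    D (x * y) = D x * y - x * D y := by
  rw [hD 1 x y (by rwa [pow_one]), pow_one, neg_one_smul, sub_eq_add_neg]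

end IsGradedDerivation

namespace CliffordAlgebra

variable {R M B : Type*} [CommRing R] [AddCommGroup M] [Module R M] {Q : QuadraticForm R M}
  [Ring B] [Algebra R B]

theorem comp_eq_of_comp_ι (f : CliffordAlgebra Q →ₐ[R] B)
    (D : CliffordAlgebra Q →ₗ[R] CliffordAlgebra Q) (D' : B →ₗ[R] B)
    (hD₀ : ∀ c : R, D (algebraMap R _ c) = 0) (hD'₀ : ∀ c : R, D' (algebraMap R B c) = 0)
    (hD : ∀ m x, D (ι Q m * x) = D (ι Q m) * x - ι Q m * D x)
    (hD' : ∀ m y, D' (f (ι Q m) * y) = D' (f (ι Q m)) * y - f (ι Q m) * D' y)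
    (hι : ∀ m, f (D (ι Q m)) = D' (f (ι Q m))) :
    f.toLinearMap ∘ₗ D = D' ∘ₗ f.toLinearMap := by
  refine LinearMap.ext fun x => ?_
  change f (D x) = D' (f x)
  induction x using CliffordAlgebra.left_induction with
  | algebraMap c => rw [hD₀, map_zero, AlgHom.commutes, hD'₀]
  | add x y hx hy => rw [map_add, map_add, hx, hy, map_add, map_add]
  | ι_mul x m hx => rw [hD, map_sub, map_mul, map_mul, hι, hx, map_mul, hD']

end CliffordAlgebra

theorem coproduct_commutes_with_koszul_differential
    (R : Type u) [CommRing R] (n : ℕ) (r : Fin n → R)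
    (d : ExteriorAlgebra R (Fin n → R) →ₗ[R] ExteriorAlgebra R (Fin n → R))
    (hgen : ∀ m : Fin n → R,
      d (ι R m) = algebraMap R (ExteriorAlgebra R (Fin n → R)) (∑ j, m j * r j))
    (hder : ∀ (i : ℕ) (x y : ExteriorAlgebra R (Fin n → R)),
      x ∈ (LinearMap.range (ι R : (Fin n → R) →ₗ[R] ExteriorAlgebra R (Fin n → R)) ^ i :
        Submodule R (ExteriorAlgebra R (Fin n → R))) →
      d (x * y) = d x * y + ((-1 : R) ^ i) • (x * d y))
    (Delta : ExteriorAlgebra R (Fin n → R) →ₐ[R]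
      ExteriorAlgebra R ((Fin n → R) × (Fin n → R)))
    (hDelta : ∀ m : Fin n → R, Delta (ι R m) = ι R ((m, 0) : (Fin n → R) × (Fin n → R)) +
      ι R ((0, m) : (Fin n → R) × (Fin n → R)))
    (dOne : ExteriorAlgebra R ((Fin n → R) × (Fin n → R)) →ₗ[R]
      ExteriorAlgebra R ((Fin n → R) × (Fin n → R)))
    -- `d ⊗ 1` contracts only the first tensor factor: `ι (m, m') ↦ ∑ⱼ mⱼ rⱼ`
    (hgen1 : ∀ m : (Fin n → R) × (Fin n → R),
      dOne (ι R m) = algebraMap R _ (∑ j, m.1 j * r j))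
    (hder1 : ∀ (i : ℕ) (x y : ExteriorAlgebra R ((Fin n → R) × (Fin n → R))),
      x ∈ (LinearMap.range (ι R : ((Fin n → R) × (Fin n → R)) →ₗ[R]
          ExteriorAlgebra R ((Fin n → R) × (Fin n → R))) ^ i :
        Submodule R (ExteriorAlgebra R ((Fin n → R) × (Fin n → R)))) →
      dOne (x * y) = dOne x * y + ((-1 : R) ^ i) • (x * dOne y))
    :
    Delta.toLinearMap ∘ₗ d = dOne ∘ₗ Delta.toLinearMap := by
  have hd : IsGradedDerivation _ d := hder
  have hdOne : IsGradedDerivation _ dOne := hder1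
  have hDelta_mem (m : Fin n → R) : Delta (ι R m) ∈ LinearMap.range (ι R) := by
    rw [hDelta, ← map_add]
    exact LinearMap.mem_range_self _ _
  refine CliffordAlgebra.comp_eq_of_comp_ι Delta d dOne hd.map_algebraMap
    hdOne.map_algebraMap (fun m => hd.map_mul_of_mem (LinearMap.mem_range_self _ m))
    (fun m => hdOne.map_mul_of_mem (hDelta_mem m)) fun m => ?_
  rw [hgen, AlgHom.commutes, hDelta, map_add, hgen1, hgen1]
  simp only [Pi.zero_apply, zero_mul, Finset.sum_const_zero, map_zero, add_zero]
end

section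
/- Let (r_1,...,r_n) be a regular sequence in a commutative ring R generating the ideal I. Then Tor_*^R(R/I, R/I) is isomorphic as a graded R/I-algebra to the exterior algebra over R/I on a free module of rank n concentrated in degree 1, i.e. Tor_*^R(R/I, R/I) ≅ R/I ⊗_R Λ_*^R(U) where U is free of rank n. -/
/-- Index type for the standard basis of the degree-`p` part of the exterior algebra
on a free module with basis `Fin n`: subsets of `Fin n` of cardinality `p`. -/
abbrev ExtIdx (n p : ℕ) := {s : Finset (Fin n) // s.card = p}

universe u

open CategoryTheory

/-!
The Koszul complex of `r₁, …, rₙ` is built one element at a time: that of `r₁, …, rₖ` is the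
mapping cone of multiplication by `rₖ` on that of `r₁, …, rₖ₋₁`. If the latter resolves
`R ⧸ (r₁, …, rₖ₋₁)` and `rₖ` is a nonzerodivisor on this quotient, the cone resolves
`R ⧸ (r₁, …, rₖ)`. Its `p`-th module is free on the `p`-subsets of `Fin n` (Pascal's rule) and its
differentials have entries in `I`, so they vanish after tensoring with `R ⧸ I`, and
`Tor_p^R(R ⧸ I, R ⧸ I)` is the `p`-th module tensored with `R ⧸ I`.
-/

namespace ExtIdx

lemma card (n p : ℕ) : Fintype.card (ExtIdx n p) = n.choose p := by
  simp [Fintype.card_finset_len]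

instance (n : ℕ) : Unique (ExtIdx n 0) where
  default := ⟨∅, rfl⟩
  uniq s := Subtype.ext (Finset.card_eq_zero.mp s.2)

instance (p : ℕ) : IsEmpty (ExtIdx 0 (p + 1)) :=
  ⟨fun s => by simpa [Subsingleton.elim s.1 ∅] using s.2⟩

noncomputable def sumEquivSucc (n p : ℕ) :
    ExtIdx n (p + 1) ⊕ ExtIdx n p ≃ ExtIdx (n + 1) (p + 1) :=
  Fintype.equivOfCardEq <| by
    rw [Fintype.card_sum, card, card, card, Nat.choose_succ_succ', add_comm]

end ExtIdx

section TensorQuotient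

variable {R M N : Type*} [CommRing R] [AddCommGroup M] [Module R M] [AddCommGroup N] [Module R N]
  {I : Ideal R}

open TensorProduct

lemma TensorProduct.tmul_eq_zero_of_mem_smul_top {z : M} (hz : z ∈ I • (⊤ : Submodule R M))
    (y : R ⧸ I) : z ⊗ₜ[R] y = 0 := by
  obtain ⟨b, rfl⟩ := Ideal.Quotient.mk_surjective y
  have h1 : z ⊗ₜ[R] (1 : R ⧸ I) = 0 := by
    rw [← tensorQuotEquivQuotSMul_symm_mk, (Submodule.Quotient.mk_eq_zero _).2 hz, map_zero]
  rw [← Ideal.Quotient.algebraMap_eq, Algebra.algebraMap_eq_smul_one, tmul_smul, h1, smul_zero]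

lemma LinearMap.rTensor_eq_zero_of_range_le_smul_top {f : M →ₗ[R] N}
    (hf : LinearMap.range f ≤ I • ⊤) : f.rTensor (R ⧸ I) = 0 :=
  TensorProduct.ext' fun m y => TensorProduct.tmul_eq_zero_of_mem_smul_top (hf ⟨m, rfl⟩) y

lemma Submodule.prodMk_mem_smul_top {J : Ideal R} {a : M} {b : N}
    (ha : a ∈ J • (⊤ : Submodule R M)) (hb : b ∈ J • (⊤ : Submodule R N)) :
    (a, b) ∈ J • (⊤ : Submodule R (M × N)) := by
  rw [← add_zero a, ← zero_add b, ← Prod.mk_add_mk]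
  exact add_mem (Submodule.smul_top_le_comap_smul_top J (LinearMap.inl R M N) ha)
    (Submodule.smul_top_le_comap_smul_top J (LinearMap.inr R M N) hb)

end TensorQuotient

section ZeroDifferentials

variable {C D : Type*} [Category C] [Category D] [Abelian C] [Abelian D]

noncomputable def HomologicalComplex.homologyIsoXOfDEqZero {ι : Type*} {c : ComplexShape ι}
    (K : HomologicalComplex D c) (hd : ∀ i j, K.d i j = 0) (n : ι) : K.homology n ≅ K.X n :=
  (K.isoHomologyπ _ n rfl (hd _ _)).symm ≪≫ K.iCyclesIso n _ rfl (hd _ _)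

noncomputable def CategoryTheory.ProjectiveResolution.leftDerivedObjIsoOfMapDEqZero
    [HasProjectiveResolutions C] {X : C} (P : ProjectiveResolution X) (F : C ⥤ D) [F.Additive]
    (hF : ∀ i j, F.map (P.complex.d i j) = 0) (n : ℕ) :
    (F.leftDerived n).obj X ≅ F.obj (P.complex.X n) :=
  P.isoLeftDerivedObj F n ≪≫ ((F.mapHomologicalComplex _).obj P.complex).homologyIsoXOfDEqZero hF n

end ZeroDifferentials

/-- The Koszul complex of a regular sequence generating `I`, remembered only through the
properties used to compute `Tor`. -/
structure KoszulResolution (R : Type u) [CommRing R] (n : ℕ) (I : Ideal R) where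
  X : ℕ → ModuleCat.{u} R
  d : ∀ p, X (p + 1) →ₗ[R] X p
  d_comp_d : ∀ p, d p ∘ₗ d (p + 1) = 0
  basisEquiv : ∀ p, X p ≃ₗ[R] (ExtIdx n p →₀ R)
  augEquiv : X 0 ≃ₗ[R] R
  range_d_le : ∀ p, LinearMap.range (d p) ≤ I • ⊤
  ker_d_le : ∀ p, LinearMap.ker (d p) ≤ LinearMap.range (d (p + 1))
  range_d_zero : LinearMap.range (d 0) = Submodule.comap (augEquiv : X 0 →ₗ[R] R) I

namespace KoszulResolution

variable (R : Type u) [CommRing R] in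
noncomputable def zero : KoszulResolution R 0 ⊥ where
  X p := ModuleCat.of R (ExtIdx 0 p →₀ R)
  d _ := 0
  d_comp_d _ := rfl
  basisEquiv _ := LinearEquiv.refl _ _
  augEquiv := Finsupp.uniqueLinearEquiv R R default
  range_d_le _ := by simp
  ker_d_le p z _ := by simp [Subsingleton.elim z 0]
  range_d_zero := by simp [Submodule.comap_bot]

variable {R : Type u} [CommRing R] {n : ℕ} {I : Ideal R} (K : KoszulResolution R n I) (x : R)

abbrev coneX : ℕ → ModuleCat.{u} R
  | 0 => K.X 0
  | p + 1 => ModuleCat.of R (K.X (p + 1) × K.X p)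

def coneD : ∀ p, K.coneX (p + 1) →ₗ[R] K.coneX p
  | 0 => (K.d 0).coprod (x • LinearMap.id)
  | p + 1 => ((K.d (p + 1)).coprod (x • LinearMap.id)).prod (-(K.d p ∘ₗ LinearMap.snd R _ _))

@[simp]
lemma d_d_apply (p : ℕ) (z : K.X (p + 2)) : K.d p (K.d (p + 1) z) = 0 :=
  LinearMap.congr_fun (K.d_comp_d p) z

lemma augEquiv_d_mem (w : K.X 1) : K.augEquiv (K.d 0 w) ∈ I :=
  (K.range_d_zero ▸ ⟨w, rfl⟩ : K.d 0 w ∈ Submodule.comap (K.augEquiv : K.X 0 →ₗ[R] R) I)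

lemma coneD_comp_coneD (p : ℕ) : K.coneD x p ∘ₗ K.coneD x (p + 1) = 0 := by
  refine LinearMap.ext fun z => ?_
  cases p with
  | zero =>
    show K.d 0 (K.d 1 z.1 + x • z.2) + x • -K.d 0 z.2 = 0
    simp
  | succ p =>
    show (K.d (p + 1) (K.d (p + 2) z.1 + x • z.2) + x • -K.d (p + 1) z.2,
      -K.d p (-K.d (p + 1) z.2)) = ((0 : K.X (p + 1)), (0 : K.X p))
    simp

lemma range_coneD_le (p : ℕ) :
    LinearMap.range (K.coneD x p) ≤ (I ⊔ Ideal.span {x}) • ⊤ := by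
  have hd : ∀ q (w : K.X (q + 1)), K.d q w ∈ (I ⊔ Ideal.span {x}) • (⊤ : Submodule R (K.X q)) :=
    fun q w => Submodule.smul_mono_left le_sup_left (K.range_d_le q ⟨w, rfl⟩)
  have hsmul : ∀ q (w : K.X q), x • w ∈ (I ⊔ Ideal.span {x}) • (⊤ : Submodule R (K.X q)) :=
    fun _ _ => Submodule.smul_mem_smul
      (Ideal.mem_sup_right (Ideal.mem_span_singleton_self x)) Submodule.mem_top
  rintro _ ⟨z, rfl⟩
  cases p with
  | zero => exact add_mem (hd 0 z.1) (hsmul 0 z.2)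
  | succ p =>
    exact Submodule.prodMk_mem_smul_top (add_mem (hd _ z.1) (hsmul _ z.2)) (neg_mem (hd p z.2))

lemma mem_range_coneD_succ {p : ℕ} {z₁ : K.X (p + 1)} {z₂ : K.X p}
    (hz : K.d p z₁ + x • z₂ = 0) (hz₂ : z₂ ∈ LinearMap.range (K.d p)) :
    ((z₁, z₂) : K.X (p + 1) × K.X p) ∈ LinearMap.range (K.coneD x (p + 1)) := by
  obtain ⟨c, rfl⟩ := hz₂
  obtain ⟨w, hw⟩ := K.ker_d_le p (show z₁ + x • c ∈ LinearMap.ker (K.d p) by simpa using hz)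
  refine ⟨(w, -c), ?_⟩
  show (K.d (p + 1) w + x • -c, -K.d p (-c)) = (z₁, K.d p c)
  simp [hw]

lemma ker_coneD_le (hx : IsSMulRegular (R ⧸ I) x) (p : ℕ) :
    LinearMap.ker (K.coneD x p) ≤ LinearMap.range (K.coneD x (p + 1)) := by
  intro z hz
  cases p with
  | zero =>
    replace hz : K.d 0 z.1 + x • z.2 = 0 := hz
    refine K.mem_range_coneD_succ x hz ?_
    rw [K.range_d_zero, Submodule.mem_comap]
    refine mem_of_isSMulRegular_quotient_of_smul_mem hx ?_
    rw [LinearEquiv.coe_coe, ← map_smul, eq_neg_of_add_eq_zero_right hz, ← map_neg]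
    exact K.augEquiv_d_mem (-z.1)
  | succ p =>
    replace hz : (K.d (p + 1) z.1 + x • z.2, -K.d p z.2) = ((0 : K.X (p + 1)), (0 : K.X p)) := hz
    simp only [Prod.mk.injEq, neg_eq_zero] at hz
    exact K.mem_range_coneD_succ x hz.1 (K.ker_d_le p hz.2)

lemma range_coneD_zero : LinearMap.range (K.coneD x 0) =
    Submodule.comap (K.augEquiv : K.X 0 →ₗ[R] R) (I ⊔ Ideal.span {x}) := by
  refine Submodule.ext fun z => ?_
  simp only [LinearMap.mem_range, Submodule.mem_comap, Submodule.mem_sup, Ideal.mem_span_singleton']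
  constructor
  · rintro ⟨w, rfl⟩
    refine ⟨_, K.augEquiv_d_mem w.1, K.augEquiv w.2 * x, ⟨_, rfl⟩, ?_⟩
    show K.augEquiv (K.d 0 w.1) + _ = K.augEquiv (K.d 0 w.1 + x • w.2)
    simp [mul_comm]
  · rintro ⟨a, ha, _, ⟨c, rfl⟩, hz⟩
    rw [LinearEquiv.coe_coe] at hz
    obtain ⟨w, hw⟩ : z - c • x • K.augEquiv.symm 1 ∈ LinearMap.range (K.d 0) := by
      rw [K.range_d_zero, Submodule.mem_comap]
      simpa [← hz, smul_smul] using ha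
    refine ⟨(w, c • K.augEquiv.symm 1), ?_⟩
    show K.d 0 w + x • c • K.augEquiv.symm 1 = z
    simp [hw, smul_comm x c]

noncomputable def cone (hx : IsSMulRegular (R ⧸ I) x) :
    KoszulResolution R (n + 1) (I ⊔ Ideal.span {x}) where
  X := K.coneX
  d := K.coneD x
  d_comp_d := K.coneD_comp_coneD x
  basisEquiv
    | 0 => K.basisEquiv 0 ≪≫ₗ Finsupp.domLCongr (Equiv.ofUnique _ _)
    | p + 1 => LinearEquiv.prodCongr (K.basisEquiv (p + 1)) (K.basisEquiv p) ≪≫ₗ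
        (Finsupp.sumFinsuppLEquivProdFinsupp R).symm ≪≫ₗ
        Finsupp.domLCongr (ExtIdx.sumEquivSucc n p)
  augEquiv := K.augEquiv
  range_d_le := K.range_coneD_le x
  ker_d_le := K.ker_coneD_le x hx
  range_d_zero := K.range_coneD_zero x

open RingTheory.Sequence in
theorem nonempty_of_isWeaklyRegular (rs : List R) (h : IsWeaklyRegular R rs) :
    Nonempty (KoszulResolution R rs.length (Ideal.ofList rs)) := by
  induction rs using List.reverseRecOn with
  | nil => simpa using ⟨zero R⟩
  | append_singleton rs x ih =>
    rw [isWeaklyRegular_append_iff, isWeaklyRegular_singleton_iff, smul_eq_mul,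
      Ideal.mul_top] at h
    obtain ⟨K⟩ := ih h.1
    rw [List.length_append, List.length_singleton, Ideal.ofList_append, Ideal.ofList_singleton]
    exact ⟨K.cone x h.2⟩

noncomputable def complex : ChainComplex (ModuleCat.{u} R) ℕ :=
  ChainComplex.of K.X (fun p => ModuleCat.ofHom (K.d p))
    (fun p => ModuleCat.hom_ext (K.d_comp_d p))

lemma complex_d (p : ℕ) : K.complex.d (p + 1) p = ModuleCat.ofHom (K.d p) :=
  ChainComplex.of_d K.X (fun p => ModuleCat.ofHom (K.d p)) p

noncomputable def aug : K.X 0 →ₗ[R] R ⧸ I :=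
  I.mkQ ∘ₗ (K.augEquiv : K.X 0 →ₗ[R] R)

lemma ker_aug : LinearMap.ker K.aug = LinearMap.range (K.d 0) := by
  rw [K.range_d_zero, aug, LinearMap.ker_comp, Submodule.ker_mkQ]

lemma aug_surjective : Function.Surjective K.aug :=
  I.mkQ_surjective.comp K.augEquiv.surjective

lemma aug_comp_d : K.aug ∘ₗ K.d 0 = 0 := by
  rw [← LinearMap.range_le_ker_iff, K.ker_aug]

noncomputable def π : K.complex ⟶ (ChainComplex.single₀ (ModuleCat.{u} R)).obj (.of R (R ⧸ I)) :=
  (ChainComplex.toSingle₀Equiv K.complex _).symm ⟨ModuleCat.ofHom K.aug, by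
    rw [complex_d]
    exact ModuleCat.hom_ext K.aug_comp_d⟩

lemma π_f_zero : K.π.f 0 = ModuleCat.ofHom K.aug :=
  ChainComplex.toSingle₀Equiv_symm_apply_f_zero _ _

lemma quasiIsoAt_π_zero : QuasiIsoAt K.π 0 := by
  rw [ChainComplex.quasiIsoAt₀_iff,
    ShortComplex.quasiIso_iff_of_zeros' _ (K.complex.shape 0 0 (by simp)) rfl rfl]
  constructor
  · rw [ShortComplex.moduleCat_exact_iff_ker_sub_range]
    show LinearMap.ker (K.π.f 0).hom ≤ LinearMap.range (K.complex.d 1 0).hom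
    rw [π_f_zero, complex_d]
    exact K.ker_aug.le
  · rw [ModuleCat.epi_iff_surjective]
    show Function.Surjective (K.π.f 0)
    rw [π_f_zero]
    exact K.aug_surjective

lemma exactAt_complex_succ (p : ℕ) : K.complex.ExactAt (p + 1) := by
  rw [HomologicalComplex.exactAt_iff' _ (p + 2) (p + 1) p (by simp) (by simp),
    ShortComplex.moduleCat_exact_iff_ker_sub_range]
  show LinearMap.ker (K.complex.d (p + 1) p).hom ≤ LinearMap.range (K.complex.d (p + 2) (p + 1)).hom
  rw [complex_d, complex_d]
  exact K.ker_d_le p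

noncomputable def resolution : ProjectiveResolution (ModuleCat.of R (R ⧸ I)) where
  complex := K.complex
  projective p := ModuleCat.projective_of_free (Finsupp.basisSingleOne.map (K.basisEquiv p).symm)
  π := K.π
  quasiIso := ⟨fun p => by
    cases p with
    | zero => exact K.quasiIsoAt_π_zero
    | succ p =>
      rw [quasiIsoAt_iff_exactAt' K.π (p + 1) (ChainComplex.exactAt_succ_single_obj _ p)]
      exact K.exactAt_complex_succ p⟩

open MonoidalCategory in
lemma tensoringRight_map_complex_d (i j : ℕ) :
    ((tensoringRight (ModuleCat.{u} R)).obj (.of R (R ⧸ I))).map (K.complex.d i j) = 0 := by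
  rcases eq_or_ne (j + 1) i with rfl | h
  · rw [complex_d]
    exact ModuleCat.hom_ext ((K.d j).rTensor_eq_zero_of_range_le_smul_top (K.range_d_le j))
  · rw [K.complex.shape i j h, Functor.map_zero]

noncomputable def torIso (p : ℕ) :
    ((Tor' (ModuleCat.{u} R) p).obj (.of R (R ⧸ I))).obj (.of R (R ⧸ I)) ≅
      .of R (ExtIdx n p →₀ R ⧸ I) :=
  K.resolution.leftDerivedObjIsoOfMapDEqZero _ K.tensoringRight_map_complex_d p ≪≫
    ((K.basisEquiv p).rTensor (R ⧸ I) ≪≫ₗ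
      TensorProduct.finsuppScalarLeft R (R ⧸ I) (ExtIdx n p)).toModuleIso

end KoszulResolution

lemma Ideal.ofList_ofFn {R : Type*} [CommSemiring R] {n : ℕ} (r : Fin n → R) :
    Ideal.ofList (List.ofFn r) = Ideal.span (Set.range r) :=
  congrArg Ideal.span (Set.ext fun _ => List.mem_ofFn)

/-
`Tor_p^R(R/I, R/I)` is compared with the degree-`p` part `R/I ⊗ Λ^p(U)` of the exterior algebra,
free over `R/I` on `ExtIdx n p`; an `R`-linear isomorphism between modules annihilated by `I`
is automatically `R/I`-linear.
-/
theorem tor_of_quotient_regular_is_exterior_algebra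
    (R : Type u) [CommRing R] (n : ℕ) (r : Fin n → R)
    (hreg : RingTheory.Sequence.IsRegular R (List.ofFn r))
    (I : Ideal R) (hI : I = Ideal.span (Set.range r)) (p : ℕ) :
    Nonempty ((((Tor' (ModuleCat.{u} R) p).obj (ModuleCat.of R (R ⧸ I))).obj
        (ModuleCat.of R (R ⧸ I))) ≅ ModuleCat.of R (ExtIdx n p →₀ (R ⧸ I))) := by
  have hK := KoszulResolution.nonempty_of_isWeaklyRegular _ hreg.toIsWeaklyRegular
  rw [List.length_ofFn, Ideal.ofList_ofFn, ← hI] at hK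
  obtain ⟨K⟩ := hK
  exact ⟨K.torIso p⟩
end

section
/- Let (r_1,...,r_n) be a regular sequence in a commutative ring R generating the ideal I. Then I/I² is a free R/I-module with basis the residue classes {r_1},...,{r_n}. -/
/-!
If `r₁, …, rₙ` is weakly regular, every relation `∑ aᵢ rᵢ = 0` has all its coefficients in
`I = (r₁, …, rₙ)`: regularity of `rₙ` modulo `(r₁, …, rₙ₋₁)` puts `aₙ` in that ideal, and
subtracting Koszul relations then leaves a relation among `r₁, …, rₙ₋₁`.
The classes `{rᵢ}` always span `I/I²`. If `∑ aᵢ rᵢ ∈ I² = I • (r₁, …, rₙ)`, it equals some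
`∑ cᵢ rᵢ` with `cᵢ ∈ I`, so `aᵢ - cᵢ ∈ I` by the above and the `{rᵢ}` are independent over `R/I`.
-/

open Ideal Set

variable {R : Type*} [CommRing R]

lemma Ideal.ofList_ofFn_s5 {n : ℕ} (r : Fin n → R) : ofList (List.ofFn r) = span (range r) :=
  congrArg span (Set.ext fun _ => List.mem_ofFn)

namespace RingTheory.Sequence

lemma isWeaklyRegular_ofFn_succ_iff {M : Type*} [AddCommGroup M] [Module R M] {n : ℕ}
    (r : Fin (n + 1) → R) :
    IsWeaklyRegular M (List.ofFn r) ↔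
      IsWeaklyRegular M (List.ofFn (Fin.init r)) ∧
        IsSMulRegular (M ⧸ (span (range (Fin.init r)) • ⊤ : Submodule R M)) (r (Fin.last n)) := by
  rw [List.ofFn_succ', List.concat_eq_append, isWeaklyRegular_append_iff,
    isWeaklyRegular_singleton_iff, ofList_ofFn_s5]
  rfl

theorem IsWeaklyRegular.mem_span_of_sum_mul_eq_zero {n : ℕ} {r : Fin n → R}
    (hr : IsWeaklyRegular R (List.ofFn r)) {a : Fin n → R} (ha : ∑ i, a i * r i = 0)
    (i : Fin n) : a i ∈ span (range r) := by
  induction n with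
  | zero => exact i.elim0
  | succ n ih =>
    obtain ⟨hinit, hlast⟩ := (isWeaklyRegular_ofFn_succ_iff r).mp hr
    rw [smul_eq_mul, mul_top] at hlast
    set J := span (range (Fin.init r))
    have hJ : J ≤ span (range r) := span_mono (range_comp_subset_range _ _)
    rw [Fin.sum_univ_castSucc] at ha
    have hlastJ : a (Fin.last n) ∈ J := by
      refine mem_of_isSMulRegular_quotient_of_smul_mem hlast ?_
      rw [smul_eq_mul, mul_comm, eq_neg_of_add_eq_zero_right ha]
      exact neg_mem (sum_mem fun j _ => mul_mem_left _ _ (subset_span ⟨j, rfl⟩))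
    obtain ⟨d, hd⟩ := (Submodule.mem_span_range_iff_exists_fun R).mp hlastJ
    have hrel : ∑ j, (a j.castSucc + d j * r (Fin.last n)) * Fin.init r j = 0 := by
      simp only [add_mul, Finset.sum_add_distrib, mul_right_comm _ (r (Fin.last n)),
        ← Finset.sum_mul]
      simpa only [← hd, smul_eq_mul, Fin.init] using ha
    refine Fin.lastCases (hJ hlastJ) (fun j => ?_) i
    simpa using
      sub_mem (hJ (ih hinit hrel j)) (mul_mem_left _ (d j) (subset_span ⟨Fin.last n, rfl⟩))

end RingTheory.Sequence

namespace Ideal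

variable {ι : Type*} [Fintype ι] (r : ι → R)

lemma sum_mk_smul_toCotangent (a : ι → R) :
    ∑ i, Quotient.mk (span (range r)) (a i) •
        (span (range r)).toCotangent ⟨r i, subset_span ⟨i, rfl⟩⟩ =
      (span (range r)).toCotangent
        ⟨∑ i, a i * r i, (Submodule.mem_span_range_iff_exists_fun R).mpr ⟨a, rfl⟩⟩ := by
  simp only [← Quotient.algebraMap_eq, algebraMap_smul, ← map_smul, ← map_sum]
  congr 1
  ext
  simp

lemma span_range_toCotangent_eq_top :
    Submodule.span (R ⧸ span (range r))
        (range fun j => (span (range r)).toCotangent ⟨r j, subset_span ⟨j, rfl⟩⟩) = ⊤ := by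
  refine eq_top_iff.mpr fun x _ => ?_
  obtain ⟨⟨y, hy⟩, rfl⟩ := (span (range r)).toCotangent_surjective x
  obtain ⟨a, rfl⟩ := (Submodule.mem_span_range_iff_exists_fun R).mp hy
  exact (Submodule.mem_span_range_iff_exists_fun _).mpr ⟨_, sum_mk_smul_toCotangent r a⟩

lemma linearIndependent_toCotangent
    (h : ∀ a : ι → R, ∑ i, a i * r i = 0 → ∀ i, a i ∈ span (range r)) :
    LinearIndependent (R ⧸ span (range r))
      fun j => (span (range r)).toCotangent ⟨r j, subset_span ⟨j, rfl⟩⟩ := by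
  rw [Fintype.linearIndependent_iff]
  intro g hg i
  obtain ⟨a, rfl⟩ := Quotient.mk_surjective.comp_left g
  simp only [Function.comp_apply] at hg ⊢
  rw [sum_mk_smul_toCotangent, toCotangent_eq_zero, pow_two, ← smul_eq_mul,
    Submodule.mem_ideal_smul_span_iff_exists_sum] at hg
  obtain ⟨c, hc, hca⟩ := hg
  rw [Finsupp.sum_fintype _ _ fun i => zero_smul R (r i)] at hca
  have hrel : ∑ i, (a i - c i) * r i = 0 := by
    rw [Finset.sum_congr rfl fun i _ => sub_mul (a i) (c i) (r i), Finset.sum_sub_distrib]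
    exact sub_eq_zero.mpr hca.symm
  rw [Quotient.eq_zero_iff_mem]
  simpa using add_mem (h _ hrel i) (hc i)

end Ideal

universe u

theorem cotangent_module_free_on_regular_sequence
    (R : Type u) [CommRing R] (n : ℕ) (r : Fin n → R)
    (hreg : RingTheory.Sequence.IsRegular R (List.ofFn r))
    (I : Ideal R) (hI : I = Ideal.span (Set.range r)) :
    ∃ b : Module.Basis (Fin n) (R ⧸ I) I.Cotangent,
      ∀ j : Fin n, b j = I.toCotangent ⟨r j, by rw [hI]; exact Ideal.subset_span ⟨j, rfl⟩⟩ := by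
  subst hI
  have hli := linearIndependent_toCotangent r fun _ =>
    hreg.toIsWeaklyRegular.mem_span_of_sum_mul_eq_zero
  exact ⟨.mk hli (span_range_toCotangent_eq_top r).ge, fun j => Module.Basis.mk_apply _ _ j⟩
end
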